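/- arXiv:1712.03082 — 5 statements merged into one kernel-verified Lean document; each statement's English description precedes it below -/
import Mathlib

section
/- The maximum of a finite family of c-convex continuous functions on a compact space X is c-convex. Moreover, if u = max_α u_α and v := min_α (u_α)^c, then v^c = u. -/
/-- The maximum `U = max_α u_α` of a finite family of `c`-convex continuous
functions is `c`-convex; moreover, with `v := min_α (u_α)^c`, one has `v^c = U`. -/
theorem stmt_3 {X Y ι : Type*} [TopologicalSpace X] [TopologicalSpace Y]
    [CompactSpace X] [CompactSpace Y] [Nonempty X] [Nonempty Y]
    [Fintype ι] [Nonempty ι]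
    (c : X → Y → ℝ) (hc : Continuous fun p : X × Y => c p.1 p.2)
    (u : ι → X → ℝ) (hu : ∀ a, Continuous (u a))
    (hconvex : ∀ a : ι,
      (fun x : X => ⨆ y : Y, (-c x y -
        (fun y' : Y => ⨆ x' : X, (-c x' y' - u a x')) y)) = u a) :
    ((fun x : X => ⨆ y : Y, (-c x y -
        (fun y' : Y => ⨆ x' : X, (-c x' y' - (⨆ a : ι, u a x'))) y))
      = fun x : X => ⨆ a : ι, u a x)
    ∧ ((fun x : X => ⨆ y : Y, (-c x y -
        (fun y' : Y => ⨅ a : ι, ⨆ x' : X, (-c x' y' - u a x')) y))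
      = fun x : X => ⨆ a : ι, u a x) := by
  classical
  -- bound on c
  obtain ⟨C, hC⟩ : ∃ C : ℝ, ∀ x y, |c x y| ≤ C := by
    obtain ⟨p, -, hp⟩ := isCompact_univ.exists_isMaxOn Set.univ_nonempty
      ((hc.abs).continuousOn (s := Set.univ))
    exact ⟨|c p.1 p.2|, fun x y => hp (Set.mem_univ (x, y))⟩
  -- uniform bound on the u a
  have hBa : ∀ a, ∃ B : ℝ, ∀ x, |u a x| ≤ B := fun a => by
    obtain ⟨x₀, -, hx₀⟩ := isCompact_univ.exists_isMaxOn Set.univ_nonempty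
      ((hu a).abs.continuousOn (s := Set.univ))
    exact ⟨|u a x₀|, fun x => hx₀ (Set.mem_univ x)⟩
  choose Ba hBa using hBa
  set B : ℝ := ⨆ a, Ba a with hBdef
  have hB : ∀ a x, |u a x| ≤ B := fun a x =>
    (hBa a x).trans (le_ciSup (Set.finite_range Ba).bddAbove a)
  set U : X → ℝ := fun x => ⨆ a, u a x with hUdef
  have hUle : ∀ x, U x ≤ B := fun x =>
    ciSup_le fun a => (abs_le.1 (hB a x)).2
  have hUge : ∀ x, -B ≤ U x := fun x => by
    obtain ⟨a⟩ := (inferInstance : Nonempty ι)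
    exact le_trans (abs_le.1 (hB a x)).1 (le_ciSup (f := fun a => u a x) (Set.finite_range _).bddAbove a)
  have huU : ∀ a x, u a x ≤ U x := fun a x => le_ciSup (f := fun a => u a x) (Set.finite_range _).bddAbove a
  -- the transforms
  set ψ : ι → Y → ℝ := fun a y => ⨆ x, -c x y - u a x with hψdef
  set φ : Y → ℝ := fun y => ⨆ x, -c x y - U x with hφdef
  set v : Y → ℝ := fun y => ⨅ a, ψ a y with hvdef
  -- boundedness of the inner families
  have hbU : ∀ y, BddAbove (Set.range fun x => -c x y - U x) := fun y =>
    ⟨C + B, Set.forall_mem_range.2 fun x => by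
      have h1 : -c x y ≤ C := by have := abs_le.1 (hC x y); linarith
      have := hUge x; linarith⟩
  have hbu : ∀ a y, BddAbove (Set.range fun x => -c x y - u a x) := fun a y =>
    ⟨C + B, Set.forall_mem_range.2 fun x => by
      have h1 : -c x y ≤ C := by have := abs_le.1 (hC x y); linarith
      have := (abs_le.1 (hB a x)).1; linarith⟩
  -- lower bounds for the transforms
  have hφge : ∀ y, -C - B ≤ φ y := fun y => by
    obtain ⟨x⟩ := (inferInstance : Nonempty X)
    refine le_trans ?_ (le_ciSup (hbU y) x)
    have h1 := abs_le.1 (hC x y); have h2 := hUle x; show _ ≤ _; linarith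
  have hψge : ∀ a y, -C - B ≤ ψ a y := fun a y => by
    obtain ⟨x⟩ := (inferInstance : Nonempty X)
    refine le_trans ?_ (le_ciSup (hbu a y) x)
    have h1 := abs_le.1 (hC x y); have h2 := (abs_le.1 (hB a x)).2; show _ ≤ _; linarith
  have hvge : ∀ y, -C - B ≤ v y := fun y => le_ciInf fun a => hψge a y
  -- φ ≤ ψ a (transform is antitone)
  have hφψ : ∀ a y, φ y ≤ ψ a y := fun a y =>
    ciSup_le fun x => le_trans (by have := huU a x; show _ ≤ _; linarith) (le_ciSup (hbu a y) x)
  -- φ ≤ v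
  have hφv : ∀ y, φ y ≤ v y := fun y => le_ciInf fun a => hφψ a y
  -- v ≤ ψ a
  have hvψ : ∀ a y, v y ≤ ψ a y := fun a y =>
    ciInf_le (Set.finite_range _).bddBelow a
  -- bddAbove for the outer sups (in y)
  have hbφ : ∀ x, BddAbove (Set.range fun y => -c x y - φ y) := fun x =>
    ⟨2*C + B, Set.forall_mem_range.2 fun y => by
      have h1 := abs_le.1 (hC x y); have h2 := hφge y; show _ ≤ _; linarith⟩
  have hbv : ∀ x, BddAbove (Set.range fun y => -c x y - v y) := fun x =>
    ⟨2*C + B, Set.forall_mem_range.2 fun y => by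
      have h1 := abs_le.1 (hC x y); have h2 := hvge y; show _ ≤ _; linarith⟩
  -- key: (φ)^c = U
  have key1 : ∀ x, (⨆ y, -c x y - φ y) = U x := by
    intro x
    apply le_antisymm
    · refine ciSup_le fun y => ?_
      have h : -c x y - U x ≤ φ y := le_ciSup (hbU y) x
      linarith
    · refine ciSup_le fun a => ?_
      have ha : u a x = ⨆ y, -c x y - ψ a y := by
        conv_lhs => rw [← hconvex a]
      rw [ha]
      refine ciSup_le fun y => ?_
      refine le_trans ?_ (le_ciSup (hbφ x) y)
      have := hφψ a y; show _ ≤ _; linarith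
  have key2 : ∀ x, (⨆ y, -c x y - v y) = U x := by
    intro x
    apply le_antisymm
    · calc (⨆ y, -c x y - v y) ≤ ⨆ y, -c x y - φ y :=
            ciSup_mono (hbφ x) fun y => by have := hφv y; linarith
        _ = U x := key1 x
    · refine ciSup_le fun a => ?_
      have ha : u a x = ⨆ y, -c x y - ψ a y := by
        conv_lhs => rw [← hconvex a]
      rw [ha]
      exact ciSup_mono (hbv x) fun y => by have := hvψ a y; linarith
  exact ⟨funext fun x => key1 x, funext fun x => key2 x⟩
end

section
/- If a transport plan γ ∈ Π(μ,ν) is supported in the set Γ_u = {(x,y) : u(x) + u^c(y) + c(x,y) = 0} for some c-convex function u ∈ C(X), then γ is an optimal transport plan, i.e. it minimizes ∫ c dγ over Π(μ,ν). -/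
open MeasureTheory


open Filter Topology in
/-- A continuous real-valued function on a product of two compact spaces is measurable
for the product sigma-algebra (no second-countability needed). -/
lemma measurable_of_continuous_compact_prod {X Y : Type*} [TopologicalSpace X]
    [TopologicalSpace Y] [CompactSpace X] [CompactSpace Y] [Nonempty X]
    [MeasurableSpace X] [OpensMeasurableSpace X] [MeasurableSpace Y] [OpensMeasurableSpace Y]
    (f : X × Y → ℝ) (hf : Continuous f) : Measurable f := by
  classical
  have key : ∀ ε : ℝ, 0 < ε → ∃ g : X × Y → ℝ, Measurable g ∧ ∀ p, |g p - f p| ≤ ε := by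
    intro ε hε
    have tube : ∀ x : X, ∃ U : Set X, IsOpen U ∧ x ∈ U ∧
        ∀ x' ∈ U, ∀ y : Y, |f (x', y) - f (x, y)| < ε := by
      intro x
      have hcont : Continuous fun p : X × Y => |f p - f (x, p.2)| :=
        (hf.sub (hf.comp (continuous_const.prodMk continuous_snd))).abs
      have hW : IsOpen {p : X × Y | |f p - f (x, p.2)| < ε} :=
        isOpen_lt hcont continuous_const
      have hsub : ({x} : Set X) ×ˢ (Set.univ : Set Y) ⊆
          {p : X × Y | |f p - f (x, p.2)| < ε} := by
        rintro ⟨a, b⟩ ⟨ha, -⟩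
        simp only [Set.mem_singleton_iff] at ha
        subst ha
        simpa using hε
      obtain ⟨U, V, hU, _, hxU, hYV, hUV⟩ :=
        generalized_tube_lemma isCompact_singleton isCompact_univ hW hsub
      exact ⟨U, hU, hxU rfl, fun x' hx' y =>
        hUV (Set.mk_mem_prod hx' (hYV (Set.mem_univ y)))⟩
    choose U hUopen hUmem hUprop using tube
    obtain ⟨t, ht⟩ := isCompact_univ.elim_finite_subcover U hUopen
      (fun x _ => Set.mem_iUnion.2 ⟨x, hUmem x⟩)
    set l : List X := t.toList with hl
    set d : X := Classical.arbitrary X with hd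
    set P : X → ℕ → Prop := fun x n => n < l.length ∧ x ∈ U (l.getD n d) with hPdef
    have hP : ∀ x, ∃ n, P x n := by
      intro x
      have hx := ht (Set.mem_univ x)
      simp only [Set.mem_iUnion] at hx
      obtain ⟨c, hct, hcU⟩ := hx
      have hcl : c ∈ l := by simpa [hl] using Finset.mem_toList.2 hct
      obtain ⟨i, hi, hic⟩ := List.mem_iff_getElem.1 hcl
      refine ⟨i, hi, ?_⟩
      rw [List.getD_eq_getElem l d hi, hic]
      exact hcU
    have hPm : ∀ n, MeasurableSet {x | P x n} := by
      intro n
      by_cases h : n < l.length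
      · have : {x | P x n} = U (l.getD n d) := by
          ext x; simp [hPdef, h]
        rw [this]
        exact (hUopen _).measurableSet
      · have : {x | P x n} = ∅ := by
          ext x; simp [hPdef, h]
        rw [this]
        exact MeasurableSet.empty
    have hfind : Measurable fun x : X => Nat.find (hP x) := measurable_find hP hPm
    have hF : Measurable fun q : Y × ℕ => f (l.getD q.2 d, q.1) := by
      refine measurable_from_prod_countable_left fun n => ?_
      show Measurable fun y : Y => f (l.getD n d, y)
      exact (hf.comp ((continuous_const : Continuous fun _ : Y => l.getD n d).prodMk
        continuous_id)).measurable
    refine ⟨fun p => f (l.getD (Nat.find (hP p.1)) d, p.2), ?_, ?_⟩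
    · exact hF.comp (measurable_snd.prodMk (hfind.comp measurable_fst))
    · intro p
      obtain ⟨-, hmem⟩ := Nat.find_spec (hP p.1)
      have := hUprop (l.getD (Nat.find (hP p.1)) d) p.1 hmem p.2
      rw [abs_sub_comm]
      exact le_of_lt this
  choose g hgm hgb using fun n : ℕ => key (1 / (n + 1)) (by positivity)
  have htend : Tendsto g atTop (𝓝 f) := by
    rw [tendsto_pi_nhds]
    intro p
    rw [tendsto_iff_dist_tendsto_zero]
    refine squeeze_zero (fun n => dist_nonneg) (fun n => ?_)
      tendsto_one_div_add_atTop_nhds_zero_nat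
    rw [Real.dist_eq]
    exact hgb n p
  exact measurable_of_tendsto_metrizable hgm htend


/-- If a transport plan `γ ∈ Π(μ,ν)` is supported in the set
`Γ_u = {(x,y) : u x + u^c y + c x y = 0}` for some `c`-convex `u ∈ C(X)`, then `γ` is
optimal: it minimizes `∫ c dγ` over `Π(μ,ν)`. -/
theorem stmt_5 {X Y : Type*} [TopologicalSpace X] [TopologicalSpace Y]
    [CompactSpace X] [CompactSpace Y] [Nonempty X] [Nonempty Y]
    [MeasurableSpace X] [BorelSpace X] [MeasurableSpace Y] [BorelSpace Y]
    (μ : Measure X) (ν : Measure Y) [IsProbabilityMeasure μ] [IsProbabilityMeasure ν]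
    (c : X → Y → ℝ) (hc : Continuous fun p : X × Y => c p.1 p.2)
    (u : X → ℝ) (hu : Continuous u)
    (hconvex : (fun x : X => ⨆ y : Y, (-c x y -
      (fun y' : Y => ⨆ x' : X, (-c x' y' - u x')) y)) = u)
    (γ : Measure (X × Y)) [IsProbabilityMeasure γ]
    (hγ₁ : γ.map Prod.fst = μ) (hγ₂ : γ.map Prod.snd = ν)
    (hsupp : γ {p : X × Y |
      u p.1 + (⨆ x : X, (-c x p.2 - u x)) + c p.1 p.2 = 0}ᶜ = 0) :
    ∀ γ' : Measure (X × Y), IsProbabilityMeasure γ' →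
      γ'.map Prod.fst = μ → γ'.map Prod.snd = ν →
      ∫ p, c p.1 p.2 ∂γ ≤ ∫ p, c p.1 p.2 ∂γ' := by
  intro γ' hγ' h1' h2'
  set v : Y → ℝ := fun y => ⨆ x : X, (-c x y - u x) with hv
  -- global bounds for c and u
  obtain ⟨pM, -, hpM⟩ := isCompact_univ.exists_isMaxOn Set.univ_nonempty hc.continuousOn
  obtain ⟨pm, -, hpm⟩ := isCompact_univ.exists_isMinOn Set.univ_nonempty hc.continuousOn
  obtain ⟨xM, -, hxM'⟩ := isCompact_univ.exists_isMaxOn Set.univ_nonempty hu.continuousOn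
  obtain ⟨xm, -, hxm'⟩ := isCompact_univ.exists_isMinOn Set.univ_nonempty hu.continuousOn
  have hcb : ∀ x y, c x y ≤ c pM.1 pM.2 := fun x y => hpM (Set.mem_univ (x, y))
  have hcb' : ∀ x y, c pm.1 pm.2 ≤ c x y := fun x y => hpm (Set.mem_univ (x, y))
  have hxM : ∀ x, u x ≤ u xM := fun x => hxM' (Set.mem_univ x)
  have hxm : ∀ x, u xm ≤ u x := fun x => hxm' (Set.mem_univ x)
  have bdd : ∀ y : Y, BddAbove (Set.range fun x => -c x y - u x) := by
    intro y
    refine ⟨-c pm.1 pm.2 - u xm, ?_⟩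
    rintro r ⟨x, rfl⟩
    show -c x y - u x ≤ _
    have := hcb' x y
    have := hxm x
    linarith
  -- key pointwise inequality
  have hkey : ∀ x y, 0 ≤ u x + v y + c x y := by
    intro x y
    have : -c x y - u x ≤ v y := le_ciSup (bdd y) x
    linarith
  -- bounds on v
  have hvub : ∀ y, v y ≤ -c pm.1 pm.2 - u xm := by
    intro y
    refine ciSup_le fun x => ?_
    have := hcb' x y; have := hxm x; linarith
  have hvlb : ∀ y, -c pM.1 pM.2 - u xM ≤ v y := by
    intro y
    refine le_trans ?_ (le_ciSup (bdd y) xM)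
    have := hcb xM y; linarith
  -- measurability of v
  have hvm : Measurable v := by
    refine LowerSemicontinuous.measurable ?_
    refine lowerSemicontinuous_ciSup (fun y => bdd y) fun x => ?_
    exact (((hc.comp (Continuous.prodMk_right x)).neg).sub continuous_const).lowerSemicontinuous
  have hvint : ∀ (τ : Measure Y) [IsProbabilityMeasure τ], Integrable v τ := by
    intro τ _
    refine Integrable.mono' (integrable_const (|c pm.1 pm.2| + |c pM.1 pM.2| + |u xm| + |u xM|))
      hvm.aestronglyMeasurable (Filter.Eventually.of_forall fun y => ?_)
    have h1 := hvub y; have h2 := hvlb y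
    rw [Real.norm_eq_abs, abs_le]
    constructor <;> [skip; skip] <;>
      cases' abs_cases (c pm.1 pm.2) with h h <;>
      cases' abs_cases (c pM.1 pM.2) with h' h' <;>
      cases' abs_cases (u xm) with h'' h'' <;>
      cases' abs_cases (u xM) with h''' h''' <;> linarith
  -- integrability on product
  have hci : ∀ (σ : Measure (X × Y)) [IsProbabilityMeasure σ],
      Integrable (fun p : X × Y => c p.1 p.2) σ := by
    intro σ _
    have hm := measurable_of_continuous_compact_prod _ hc
    refine Integrable.mono' (integrable_const (|c pm.1 pm.2| + |c pM.1 pM.2|))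
      hm.aestronglyMeasurable (Filter.Eventually.of_forall fun p => ?_)
    rw [Real.norm_eq_abs, abs_le]
    have h1 := hcb p.1 p.2; have h2 := hcb' p.1 p.2
    constructor <;>
      cases' abs_cases (c pm.1 pm.2) with h h <;>
      cases' abs_cases (c pM.1 pM.2) with h' h' <;> linarith
  have hui : ∀ (σ : Measure (X × Y)) [IsProbabilityMeasure σ],
      Integrable (fun p : X × Y => u p.1) σ := by
    intro σ _
    refine Integrable.mono' (integrable_const (|u xm| + |u xM|))
      ((hu.measurable.comp measurable_fst).aestronglyMeasurable)
      (Filter.Eventually.of_forall fun p => ?_)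
    rw [Real.norm_eq_abs, abs_le]
    have h1 := hxM p.1; have h2 := hxm p.1
    constructor <;>
      cases' abs_cases (u xm) with h h <;>
      cases' abs_cases (u xM) with h' h' <;> linarith
  have hvi : ∀ (σ : Measure (X × Y)) [IsProbabilityMeasure σ],
      Integrable (fun p : X × Y => v p.2) σ := by
    intro σ _
    have : Integrable v (σ.map Prod.snd) := by
      have : IsProbabilityMeasure (σ.map Prod.snd) :=
        Measure.isProbabilityMeasure_map measurable_snd.aemeasurable
      exact hvint _
    exact (integrable_map_measure hvm.aestronglyMeasurable
      measurable_snd.aemeasurable).mp this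
  -- marginal integrals
  have hmargu : ∀ (σ : Measure (X × Y)), σ.map Prod.fst = μ →
      ∫ p, u p.1 ∂σ = ∫ x, u x ∂μ := by
    intro σ hσ
    rw [← hσ, integral_map measurable_fst.aemeasurable hu.aestronglyMeasurable]
  have hmargv : ∀ (σ : Measure (X × Y)), σ.map Prod.snd = ν →
      ∫ p, v p.2 ∂σ = ∫ y, v y ∂ν := by
    intro σ hσ
    rw [← hσ, integral_map measurable_snd.aemeasurable hvm.aestronglyMeasurable]
  -- ∫ (u + v + c) dγ = 0
  have hzero : ∫ p, (u p.1 + v p.2 + c p.1 p.2) ∂γ = 0 := by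
    have hae : (fun p : X × Y => u p.1 + v p.2 + c p.1 p.2) =ᵐ[γ] 0 := by
      refine Filter.eventuallyEq_iff_exists_mem.mpr
        ⟨{p : X × Y | u p.1 + v p.2 + c p.1 p.2 = 0}, ?_, fun p hp => hp⟩
      rw [mem_ae_iff]
      exact hsupp
    rw [integral_congr_ae hae]
    simp
  have hsum : ∀ (σ : Measure (X × Y)) [IsProbabilityMeasure σ],
      ∫ p, (u p.1 + v p.2 + c p.1 p.2) ∂σ =
        ∫ p, u p.1 ∂σ + ∫ p, v p.2 ∂σ + ∫ p, c p.1 p.2 ∂σ := by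
    intro σ _
    have h1 := integral_add ((hui σ).add (hvi σ)) (hci σ)
    have h2 := integral_add (hui σ) (hvi σ)
    simp only [Pi.add_apply] at h1 h2
    rw [h1, h2]
  have hγeq : ∫ p, c p.1 p.2 ∂γ = -(∫ x, u x ∂μ) - ∫ y, v y ∂ν := by
    have := hsum γ
    rw [hzero, hmargu γ hγ₁, hmargv γ hγ₂] at this
    linarith
  have hγ'ge : 0 ≤ ∫ p, (u p.1 + v p.2 + c p.1 p.2) ∂γ' :=
    integral_nonneg fun p => hkey p.1 p.2
  have := hsum γ'
  rw [hmargu γ' h1', hmargv γ' h2'] at this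
  rw [hγeq]
  linarith [hγ'ge, this]
end

section
/- Let u be a C¹-smooth strictly quasi-convex function on T^n. For any fixed y ∈ T^n, the function x ↦ d(x,y)²/2 + u(x) attains its unique minimum at x = x_y := y + ∇u^c(y), and the function x ↦ d(x,y)²/2 is smooth in a neighborhood of x_y with Hessian equal to the identity there. -/
/-- The lattice vector in `ℝ^n` associated to `m ∈ ℤ^n`. -/
noncomputable def intVec (n : ℕ) (m : Fin n → ℤ) : EuclideanSpace ℝ (Fin n) :=
  (EuclideanSpace.equiv (Fin n) ℝ).symm fun i => (m i : ℝ)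

/-- The squared flat distance on the torus: `d(x,y)² = inf_{m ∈ ℤ^n} ‖x + m − y‖²`. -/
noncomputable def torusDistSq (n : ℕ) (x y : EuclideanSpace ℝ (Fin n)) : ℝ :=
  ⨅ m : Fin n → ℤ, ‖x + intVec n m - y‖ ^ 2

open scoped RealInnerProductSpace
open Filter Metric

namespace S9

variable {n : ℕ}

lemma intVec_apply (m : Fin n → ℤ) (i : Fin n) : intVec n m i = (m i : ℝ) := rfl

lemma intVec_zero : intVec n 0 = 0 := by
  ext i
  show ((0:ℤ):ℝ) = 0
  norm_num

lemma intVec_neg (m : Fin n → ℤ) : intVec n (-m) = -intVec n m := by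
  ext i
  show ((-m i : ℤ) : ℝ) = -((m i : ℤ) : ℝ)
  push_cast; ring

lemma norm_sq_eq (a : EuclideanSpace ℝ (Fin n)) : ‖a‖ ^ 2 = ∑ i, a i ^ 2 := by
  rw [EuclideanSpace.norm_eq, Real.sq_sqrt (by positivity)]
  simp [Real.norm_eq_abs, sq_abs]

lemma coord_le_norm (a : EuclideanSpace ℝ (Fin n)) (i : Fin n) : |a i| ≤ ‖a‖ := by
  have h1 : |a i| ^ 2 ≤ ‖a‖ ^ 2 := by
    rw [norm_sq_eq, sq_abs]
    exact Finset.single_le_sum (f := fun j => a j ^ 2) (fun j _ => sq_nonneg _)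
      (Finset.mem_univ i)
  have := Real.sqrt_le_sqrt h1
  rwa [Real.sqrt_sq (abs_nonneg _), Real.sqrt_sq (norm_nonneg _)] at this


lemma norm_le_of_sq_le_sq {a : EuclideanSpace ℝ (Fin n)} {b : ℝ} (hb : 0 ≤ b)
    (h : ‖a‖ ^ 2 ≤ b ^ 2) : ‖a‖ ≤ b := by
  nlinarith [norm_nonneg a]

lemma add_intVec_apply (a : EuclideanSpace ℝ (Fin n)) (m : Fin n → ℤ) (i : Fin n) :
    (a + intVec n m) i = a i + (m i : ℝ) := rfl

lemma nearest (z : EuclideanSpace ℝ (Fin n)) :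
    ∃ m : Fin n → ℤ, (∀ m', ‖z + intVec n m‖ ^ 2 ≤ ‖z + intVec n m'‖ ^ 2) ∧
      ‖z + intVec n m‖ ≤ n := by
  refine ⟨fun i => -(round (z i)), ?_, ?_⟩
  · intro m'
    rw [norm_sq_eq, norm_sq_eq]
    refine Finset.sum_le_sum fun i _ => ?_
    have h1 : (z + intVec n (fun i => -(round (z i)))) i = z i - (round (z i) : ℝ) := by
      rw [add_intVec_apply]; push_cast; ring
    have h2 : (z + intVec n m') i = z i - ((-(m' i) : ℤ) : ℝ) := by
      rw [add_intVec_apply]; push_cast; ring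
    rw [h1, h2, ← sq_abs (z i - _), ← sq_abs (z i - ((-(m' i) : ℤ) : ℝ))]
    have := round_le (z i) (-(m' i))
    nlinarith [abs_nonneg (z i - (round (z i) : ℝ)), abs_nonneg (z i - ((-(m' i):ℤ):ℝ))]
  · refine norm_le_of_sq_le_sq (by positivity) ?_
    rw [norm_sq_eq]
    have : ∀ i : Fin n, (z + intVec n (fun i => -(round (z i)))) i ^ 2 ≤ 1 := by
      intro i
      have h1 : (z + intVec n (fun i => -(round (z i)))) i = z i - (round (z i) : ℝ) := by
        rw [add_intVec_apply]; push_cast; ring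
      have h2 := abs_sub_round (z i)
      rw [h1, ← sq_abs]
      nlinarith [abs_nonneg (z i - (round (z i) : ℝ))]
    calc ∑ i, (z + intVec n (fun i => -(round (z i)))) i ^ 2 ≤ ∑ _i : Fin n, (1:ℝ) :=
          Finset.sum_le_sum fun i _ => this i
      _ = n := by simp
      _ ≤ (n:ℝ)^2 := by
          rcases Nat.eq_zero_or_pos n with h|h
          · simp [h]
          · have : (1:ℝ) ≤ n := by exact_mod_cast h
            nlinarith

lemma bddBelow_torus (x y : EuclideanSpace ℝ (Fin n)) :
    BddBelow (Set.range fun m : Fin n → ℤ => ‖x + intVec n m - y‖ ^ 2) := by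
  refine ⟨0, fun r hr => ?_⟩
  obtain ⟨m, rfl⟩ := hr
  positivity

lemma torusDistSq_le (x y : EuclideanSpace ℝ (Fin n)) (m : Fin n → ℤ) :
    torusDistSq n x y ≤ ‖x + intVec n m - y‖ ^ 2 :=
  ciInf_le (bddBelow_torus x y) m

lemma le_torusDistSq {x y : EuclideanSpace ℝ (Fin n)} {c : ℝ}
    (h : ∀ m, c ≤ ‖x + intVec n m - y‖ ^ 2) : c ≤ torusDistSq n x y :=
  le_ciInf h

lemma torus_attained (x y : EuclideanSpace ℝ (Fin n)) :
    ∃ m : Fin n → ℤ, torusDistSq n x y = ‖x + intVec n m - y‖ ^ 2 := by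
  obtain ⟨m, hm, -⟩ := nearest (x - y)
  refine ⟨m, le_antisymm (torusDistSq_le x y m) (le_torusDistSq fun m' => ?_)⟩
  have e : ∀ m'' : Fin n → ℤ, x + intVec n m'' - y = (x - y) + intVec n m'' := by
    intro m''; abel
  rw [e, e]; exact hm m'

variable {u : EuclideanSpace ℝ (Fin n) → ℝ}

/-- The lifted functional `F_z(x) = ‖x-z‖²/2 + u(x)`. -/
noncomputable def F (u : EuclideanSpace ℝ (Fin n) → ℝ) (z x : EuclideanSpace ℝ (Fin n)) : ℝ :=
  ‖x - z‖ ^ 2 / 2 + u x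

lemma F_eq (z x : EuclideanSpace ℝ (Fin n)) :
    F u z x = (u x + ‖x‖ ^ 2 / 2) + (‖z‖ ^ 2 / 2 - ⟪z, x⟫) := by
  have h := norm_sub_sq_real x z
  have h2 := real_inner_comm x z
  simp only [F]; linarith

lemma F_strictConvexOn
    (hqc : StrictConvexOn ℝ Set.univ fun x : EuclideanSpace ℝ (Fin n) =>
      u x + ‖x‖ ^ 2 / 2) (z : EuclideanSpace ℝ (Fin n)) :
    StrictConvexOn ℝ Set.univ (F u z) := by
  have haff : ConvexOn ℝ Set.univ
      (fun x : EuclideanSpace ℝ (Fin n) => ‖z‖ ^ 2 / 2 - ⟪z, x⟫) := by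
    refine ⟨convex_univ, ?_⟩
    intro x _ x' _ a b ha hb hab
    simp only [smul_eq_mul, inner_add_right, real_inner_smul_right]
    nlinarith
  have := hqc.add_convexOn haff
  have hfun : F u z = (fun x : EuclideanSpace ℝ (Fin n) => u x + ‖x‖ ^ 2 / 2) +
      fun x => ‖z‖ ^ 2 / 2 - ⟪z, x⟫ := funext fun x => F_eq z x
  rw [hfun]; exact this

lemma exists_bounds (hc : Continuous u)
    (hper : ∀ (x : EuclideanSpace ℝ (Fin n)) (m : Fin n → ℤ), u (x + intVec n m) = u x) :
    ∃ B B' : ℝ, ∀ x, B ≤ u x ∧ u x ≤ B' := by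
  have hcpt : IsCompact (Metric.closedBall (0 : EuclideanSpace ℝ (Fin n)) n) :=
    isCompact_closedBall _ _
  have hne : (Metric.closedBall (0 : EuclideanSpace ℝ (Fin n)) n).Nonempty :=
    ⟨0, Metric.mem_closedBall_self (by positivity)⟩
  obtain ⟨a, -, ha⟩ := hcpt.exists_isMinOn hne hc.continuousOn
  obtain ⟨b, -, hb⟩ := hcpt.exists_isMaxOn hne hc.continuousOn
  refine ⟨u a, u b, fun x => ?_⟩
  obtain ⟨m, -, hm⟩ := nearest x
  have hmem : x + intVec n m ∈ Metric.closedBall (0 : EuclideanSpace ℝ (Fin n)) n := by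
    rw [Metric.mem_closedBall, dist_zero_right]; exact hm
  have := hper x m
  exact ⟨this ▸ ha hmem, this ▸ hb hmem⟩

lemma exists_min (hc : Continuous u)
    (hper : ∀ (x : EuclideanSpace ℝ (Fin n)) (m : Fin n → ℤ), u (x + intVec n m) = u x)
    (z : EuclideanSpace ℝ (Fin n)) :
    ∃ x, ∀ x', F u z x ≤ F u z x' := by
  obtain ⟨B, B', hB⟩ := exists_bounds hc hper
  set r : ℝ := Real.sqrt (2 * (u z - B)) + 1 with hr
  have hrpos : 0 < r := by positivity
  have hFc : Continuous (F u z) := by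
    have : Continuous fun x : EuclideanSpace ℝ (Fin n) => ‖x - z‖ ^ 2 / 2 := by
      continuity
    exact this.add hc
  have hcpt : IsCompact (Metric.closedBall z r) := isCompact_closedBall _ _
  obtain ⟨x₀, hx₀mem, hx₀⟩ := hcpt.exists_isMinOn ⟨z, Metric.mem_closedBall_self hrpos.le⟩
    hFc.continuousOn
  refine ⟨x₀, fun x' => ?_⟩
  by_cases hx' : x' ∈ Metric.closedBall z r
  · exact hx₀ hx'
  · have h1 : r < ‖x' - z‖ := by
      rw [Metric.mem_closedBall, dist_eq_norm] at hx'
      linarith [not_le.mp hx']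
    have h2 : 2 * (u z - B) ≤ Real.sqrt (2 * (u z - B)) ^ 2 := by
      rcases le_or_gt 0 (2 * (u z - B)) with h | h
      · rw [Real.sq_sqrt h]
      · nlinarith [sq_nonneg (Real.sqrt (2 * (u z - B)))]
    have h3 : F u z x₀ ≤ F u z z := hx₀ (Metric.mem_closedBall_self hrpos.le)
    have h4 : F u z z = u z := by simp [F]
    have h5 : B ≤ u x' := (hB x').1
    have hsq : Real.sqrt (2 * (u z - B)) ≥ 0 := Real.sqrt_nonneg _
    have : u z < F u z x' := by
      simp only [F]
      nlinarith
    linarith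

lemma min_unique
    (hqc : StrictConvexOn ℝ Set.univ fun x : EuclideanSpace ℝ (Fin n) =>
      u x + ‖x‖ ^ 2 / 2) {z a b : EuclideanSpace ℝ (Fin n)}
    (ha : ∀ x', F u z a ≤ F u z x') (hb : ∀ x', F u z b ≤ F u z x') : a = b := by
  have hsc := F_strictConvexOn hqc z
  exact hsc.eq_of_isMinOn (fun x _ => ha x) (fun x _ => hb x)
    (Set.mem_univ a) (Set.mem_univ b)

lemma hasGradientAt_half_normSq (y x : EuclideanSpace ℝ (Fin n)) :
    HasGradientAt (fun t => ‖t - y‖ ^ 2 / 2) (x - y) x := by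
  rw [hasGradientAt_iff_hasFDerivAt]
  refine hasFDerivAt_iff_isLittleO.2 ?_
  have key : ∀ t : EuclideanSpace ℝ (Fin n),
      ‖t - y‖ ^ 2 / 2 - ‖x - y‖ ^ 2 / 2 -
        (InnerProductSpace.toDual ℝ (EuclideanSpace ℝ (Fin n)) (x - y)) (t - x)
      = ‖t - x‖ ^ 2 / 2 := by
    intro t
    rw [InnerProductSpace.toDual_apply_apply]
    have h2 : t - y = (t - x) + (x - y) := by abel
    have h3 := norm_add_sq_real (t - x) (x - y)
    have h4 := real_inner_comm (t - x) (x - y)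
    rw [h2, h3]; linarith
  refine Asymptotics.isLittleO_iff.2 fun c hc => ?_
  filter_upwards [Metric.ball_mem_nhds x (show (0:ℝ) < 2 * c by linarith)] with t ht
  rw [key t]
  rw [Metric.mem_ball, dist_eq_norm] at ht
  rw [Real.norm_eq_abs, abs_of_nonneg (by positivity)]
  have h0 : (0:ℝ) ≤ ‖t - x‖ := norm_nonneg _
  nlinarith

section MinRel

variable {z a : EuclideanSpace ℝ (Fin n)}
  (hper : ∀ (x : EuclideanSpace ℝ (Fin n)) (m : Fin n → ℤ), u (x + intVec n m) = u x)
  (hmin : ∀ x', F u z a ≤ F u z x')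

include hper hmin

lemma min_le_torus (x : EuclideanSpace ℝ (Fin n)) :
    F u z a ≤ torusDistSq n x z / 2 + u x := by
  have h : 2 * (F u z a - u x) ≤ torusDistSq n x z := by
    refine le_torusDistSq fun m => ?_
    have h1 : F u z (x + intVec n m) = ‖x + intVec n m - z‖ ^ 2 / 2 + u x := by
      rw [F, hper x m]
    have := hmin (x + intVec n m)
    linarith
  linarith

lemma torus_at_min : torusDistSq n a z = ‖a - z‖ ^ 2 := by
  refine le_antisymm ?_ (le_torusDistSq fun m => ?_)
  · have := torusDistSq_le a z 0
    rwa [intVec_zero, add_zero] at this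
  · have h1 : F u z (a + intVec n m) = ‖a + intVec n m - z‖ ^ 2 / 2 + u a := by
      rw [F, hper a m]
    have := hmin (a + intVec n m)
    rw [h1, F] at this
    linarith

end MinRel

lemma intVec_eq_zero {m : Fin n → ℤ} (h : intVec n m = 0) : m = 0 := by
  funext i
  have : ((m i : ℤ) : ℝ) = 0 := congrArg (fun v => v i) h
  exact_mod_cast this

lemma strict_gap
    (hqc : StrictConvexOn ℝ Set.univ fun x : EuclideanSpace ℝ (Fin n) =>
      u x + ‖x‖ ^ 2 / 2)
    (hper : ∀ (x : EuclideanSpace ℝ (Fin n)) (m : Fin n → ℤ), u (x + intVec n m) = u x)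
    {z a : EuclideanSpace ℝ (Fin n)} (hmin : ∀ x', F u z a ≤ F u z x')
    {m : Fin n → ℤ} (hm : m ≠ 0) : ‖a - z‖ < ‖a + intVec n m - z‖ := by
  have h1 : ‖a - z‖ ^ 2 ≤ ‖a + intVec n m - z‖ ^ 2 := by
    have hF : F u z (a + intVec n m) = ‖a + intVec n m - z‖ ^ 2 / 2 + u a := by
      rw [F, hper a m]
    have := hmin (a + intVec n m)
    rw [hF, F] at this; linarith
  rcases lt_or_eq_of_le h1 with h | h
  · have h0 : (0:ℝ) ≤ ‖a - z‖ := norm_nonneg _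
    have h0' : (0:ℝ) ≤ ‖a + intVec n m - z‖ := norm_nonneg _
    nlinarith
  · exfalso
    have hF : F u z (a + intVec n m) = F u z a := by
      rw [F, hper a m, F, ← h]
    have hmin' : ∀ x', F u z (a + intVec n m) ≤ F u z x' := fun x' => hF ▸ hmin x'
    have := min_unique hqc hmin' hmin
    have h2 : intVec n m = 0 := by
      have := congrArg (· - a) this
      simpa [add_sub_cancel_left] using this
    exact hm (intVec_eq_zero h2)

lemma finite_small (R : ℝ) : {m : Fin n → ℤ | ‖intVec n m‖ ≤ R}.Finite := by
  have hsub : {m : Fin n → ℤ | ‖intVec n m‖ ≤ R} ⊆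
      Set.pi Set.univ fun _i : Fin n => Set.Icc (-⌈R⌉) ⌈R⌉ := by
    intro m hm i _
    have h1 : |(m i : ℝ)| ≤ ‖intVec n m‖ := coord_le_norm (intVec n m) i
    have h2 : |(m i : ℝ)| ≤ (⌈R⌉ : ℝ) := le_trans (h1.trans hm) (Int.le_ceil R)
    rw [← Int.cast_abs] at h2
    have h3 : |m i| ≤ ⌈R⌉ := by exact_mod_cast h2
    exact Set.mem_Icc.2 (abs_le.mp h3)
  exact Set.Finite.subset (Set.Finite.pi fun i => Set.finite_Icc _ _) hsub

lemma gap
    (hqc : StrictConvexOn ℝ Set.univ fun x : EuclideanSpace ℝ (Fin n) =>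
      u x + ‖x‖ ^ 2 / 2)
    (hper : ∀ (x : EuclideanSpace ℝ (Fin n)) (m : Fin n → ℤ), u (x + intVec n m) = u x)
    {z a : EuclideanSpace ℝ (Fin n)} (hmin : ∀ x', F u z a ≤ F u z x') :
    ∃ ε > (0:ℝ), ∀ x ∈ Metric.ball a ε, ∀ m : Fin n → ℤ,
      ‖x - z‖ ^ 2 ≤ ‖x + intVec n m - z‖ ^ 2 := by
  set R : ℝ := 2 * ‖a - z‖ + 2 with hR
  have hSfin := finite_small (n := n) R
  set T : Finset (Fin n → ℤ) := hSfin.toFinset.erase 0 with hTdef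
  have main : ∀ ε : ℝ, 0 < ε → ε ≤ 1 →
      (∀ m ∈ T, 2 * ε ≤ ‖a + intVec n m - z‖ - ‖a - z‖) →
      ∀ x ∈ Metric.ball a ε, ∀ m : Fin n → ℤ,
        ‖x - z‖ ^ 2 ≤ ‖x + intVec n m - z‖ ^ 2 := by
    intro ε hεpos hε1 hεT x hx m
    rw [Metric.mem_ball, dist_eq_norm] at hx
    have hxz : ‖x - z‖ ≤ ‖a - z‖ + ε := by
      have h1 : x - z = (x - a) + (a - z) := by abel
      have h2 := norm_add_le (x - a) (a - z)
      rw [← h1] at h2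
      linarith
    by_cases hm0 : m = 0
    · subst hm0; rw [intVec_zero, add_zero]
    have hnorm : ‖x - z‖ ≤ ‖x + intVec n m - z‖ := by
      by_cases hmS : ‖intVec n m‖ ≤ R
      · have hmT : m ∈ T := Finset.mem_erase.2 ⟨hm0, hSfin.mem_toFinset.2 hmS⟩
        have h2 := hεT m hmT
        have h3 : ‖a + intVec n m - z‖ - ‖x + intVec n m - z‖ ≤ ‖x - a‖ := by
          have e : (a + intVec n m - z) - (x + intVec n m - z) = a - x := by abel
          have := norm_sub_norm_le (a + intVec n m - z) (x + intVec n m - z)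
          rw [e, norm_sub_rev a x] at this
          linarith
        linarith
      · push_neg at hmS
        have h3 : ‖intVec n m‖ - ‖z - x‖ ≤ ‖x + intVec n m - z‖ := by
          have e : intVec n m - (z - x) = x + intVec n m - z := by abel
          have := norm_sub_norm_le (intVec n m) (z - x)
          rw [e] at this
          linarith
        rw [norm_sub_rev z x] at h3
        linarith
    exact pow_le_pow_left₀ (norm_nonneg _) hnorm 2
  by_cases hTne : T.Nonempty
  · set δ := T.inf' hTne (fun m => ‖a + intVec n m - z‖ - ‖a - z‖) with hδ
    have hδpos : 0 < δ := by
      rw [hδ, Finset.lt_inf'_iff]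
      intro m hm
      rw [hTdef, Finset.mem_erase] at hm
      exact sub_pos.2 (strict_gap hqc hper hmin hm.1)
    have hεpos : 0 < min 1 (δ / 2) := lt_min one_pos (by linarith)
    refine ⟨min 1 (δ / 2), hεpos, main _ hεpos (min_le_left _ _) fun m hm => ?_⟩
    have h1 : δ ≤ ‖a + intVec n m - z‖ - ‖a - z‖ :=
      Finset.inf'_le (fun m => ‖a + intVec n m - z‖ - ‖a - z‖) hm
    have h2 : min 1 (δ / 2) ≤ δ / 2 := min_le_right _ _
    linarith
  · exact ⟨1, one_pos, main 1 one_pos le_rfl fun m hm => absurd ⟨m, hm⟩ hTne⟩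

lemma F_continuous (hc : Continuous u) (z : EuclideanSpace ℝ (Fin n)) :
    Continuous (F u z) := by
  have : Continuous fun x : EuclideanSpace ℝ (Fin n) => ‖x - z‖ ^ 2 / 2 := by
    continuity
  exact this.add hc

set_option maxHeartbeats 1000000 in
lemma argmin_cont
    (hqc : StrictConvexOn ℝ Set.univ fun x : EuclideanSpace ℝ (Fin n) =>
      u x + ‖x‖ ^ 2 / 2)
    (hper : ∀ (x : EuclideanSpace ℝ (Fin n)) (m : Fin n → ℤ), u (x + intVec n m) = u x)
    (hc : Continuous u)
    (xs : EuclideanSpace ℝ (Fin n) → EuclideanSpace ℝ (Fin n))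
    (hxs : ∀ z x', F u z (xs z) ≤ F u z x')
    (y : EuclideanSpace ℝ (Fin n)) :
    ∀ c > (0:ℝ), ∃ δ > (0:ℝ), ∀ z, ‖z - y‖ < δ → ‖xs z - xs y‖ ≤ c := by
  obtain ⟨B, B', hB⟩ := exists_bounds hc hper
  have hBB' : B ≤ B' := (hB 0).1.trans (hB 0).2
  set ρ : ℝ := Real.sqrt (2 * (B' - B)) with hρdef
  have hρ0 : 0 ≤ ρ := Real.sqrt_nonneg _
  have hρsq : ρ ^ 2 = 2 * (B' - B) := Real.sq_sqrt (by linarith)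
  have hρ : ∀ z, ‖xs z - z‖ ≤ ρ := by
    intro z
    refine norm_le_of_sq_le_sq hρ0 ?_
    have h1 : F u z (xs z) ≤ F u z z := hxs z z
    have h2 : F u z z = u z := by simp [F]
    have h3 := (hB z).2
    have h4 := (hB (xs z)).1
    rw [F] at h1
    rw [hρsq]
    linarith
  set R₀ : ℝ := ρ + 1 with hR₀
  set M : ℝ := R₀ + 1 with hM'
  have hMpos : 0 < M := by simp only [hM', hR₀]; linarith
  clear_value ρ R₀ M
  have hM : ∀ z x, ‖z - y‖ ≤ 1 → ‖x - y‖ ≤ R₀ →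
      |F u z x - F u y x| ≤ M * ‖z - y‖ := by
    intro z x hz hx
    have e1 : x - z = (x - y) + (y - z) := by abel
    have e2 := norm_add_sq_real (x - y) (y - z)
    have e3 : F u z x - F u y x = ⟪x - y, y - z⟫ + ‖y - z‖ ^ 2 / 2 := by
      simp only [F]
      rw [e1, e2]; ring
    have e4 : |⟪x - y, y - z⟫| ≤ ‖x - y‖ * ‖y - z‖ := abs_real_inner_le_norm _ _
    have e5 : ‖y - z‖ = ‖z - y‖ := norm_sub_rev _ _
    rw [e3]
    have h6 := abs_add_le ⟪x - y, y - z⟫ (‖y - z‖ ^ 2 / 2)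
    have h7 : |‖y - z‖ ^ 2 / 2| = ‖y - z‖ ^ 2 / 2 := abs_of_nonneg (by positivity)
    have h8 : ‖y - z‖ ^ 2 ≤ ‖z - y‖ := by
      rw [e5]; nlinarith [norm_nonneg (z - y)]
    have h9 : ‖x - y‖ * ‖y - z‖ ≤ R₀ * ‖z - y‖ := by
      rw [e5]
      exact mul_le_mul_of_nonneg_right hx (norm_nonneg _)
    have h10 : (0:ℝ) ≤ ‖z - y‖ := norm_nonneg _
    calc |⟪x - y, y - z⟫ + ‖y - z‖ ^ 2 / 2| ≤ |⟪x - y, y - z⟫| + |‖y - z‖ ^ 2 / 2| := h6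
      _ ≤ R₀ * ‖z - y‖ + ‖z - y‖ / 2 := by rw [h7]; linarith [e4, h9, h8]
      _ ≤ M * ‖z - y‖ := by rw [hM']; nlinarith
  intro c hc0
  set C : Set (EuclideanSpace ℝ (Fin n)) :=
    Metric.closedBall y R₀ ∩ {x | c ≤ ‖x - xs y‖} with hC'
  have hCc : IsCompact C :=
    (isCompact_closedBall y R₀).inter_right
      (isClosed_le continuous_const (by continuity))
  have hxsy : ‖xs y - y‖ ≤ R₀ := by
    have := hρ y; rw [hR₀]; linarith
  have hxszR : ∀ z, ‖z - y‖ ≤ 1 → ‖xs z - y‖ ≤ R₀ := by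
    intro z hz
    have h1 : xs z - y = (xs z - z) + (z - y) := by abel
    have h2 := norm_add_le (xs z - z) (z - y)
    rw [← h1] at h2
    have := hρ z
    rw [hR₀]; linarith
  by_cases hCne : C.Nonempty
  · obtain ⟨xb, hxbC, hxb⟩ := hCc.exists_isMinOn hCne (F_continuous hc y).continuousOn
    set γ : ℝ := F u y xb - F u y (xs y) with hγ'
    clear_value γ
    have hγ : 0 < γ := by
      have hle : F u y (xs y) ≤ F u y xb := hxs y xb
      rcases lt_or_eq_of_le hle with h | h
      · rw [hγ']; linarith
      · exfalso
        have hminb : ∀ x', F u y xb ≤ F u y x' := fun x' => h ▸ hxs y x'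
        have := min_unique hqc hminb (hxs y)
        have hcb : c ≤ ‖xb - xs y‖ := hxbC.2
        rw [this, sub_self, norm_zero] at hcb
        linarith
    refine ⟨min 1 (γ / (2 * M + 1)), lt_min one_pos (by positivity), fun z hz => ?_⟩
    by_contra hcon
    push_neg at hcon
    have hz1 : ‖z - y‖ ≤ 1 := le_of_lt (lt_of_lt_of_le hz (min_le_left _ _))
    have hzγ : ‖z - y‖ < γ / (2 * M + 1) := lt_of_lt_of_le hz (min_le_right _ _)
    have hxsC : xs z ∈ C := by
      refine ⟨?_, le_of_lt hcon⟩
      rw [Metric.mem_closedBall, dist_eq_norm]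
      exact hxszR z hz1
    have h5 : F u y xb ≤ F u y (xs z) := hxb hxsC
    have h6 : F u z (xs z) ≤ F u z (xs y) := hxs z (xs y)
    have e1 := abs_le.mp (hM z (xs z) hz1 (hxszR z hz1))
    have e2 := abs_le.mp (hM z (xs y) hz1 hxsy)
    have h10 : (0:ℝ) ≤ ‖z - y‖ := norm_nonneg _
    have h11 : M * ‖z - y‖ ≤ M * (γ / (2 * M + 1)) :=
      mul_le_mul_of_nonneg_left (le_of_lt hzγ) (le_of_lt hMpos)
    have h12 : 2 * (M * (γ / (2 * M + 1))) < γ := by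
      rw [div_eq_mul_inv]
      have h13 : (0:ℝ) < 2 * M + 1 := by linarith
      rw [show 2 * (M * (γ * (2 * M + 1)⁻¹)) = (2 * M) * γ / (2 * M + 1) by ring]
      rw [div_lt_iff₀ h13]
      nlinarith
    have key : γ ≤ 2 * (M * ‖z - y‖) := by
      rw [hγ']
      linarith [e1.1, e2.2, h5, h6]
    linarith [key, h11, h12]
  · refine ⟨1, one_pos, fun z hz => ?_⟩
    by_contra hcon
    push_neg at hcon
    refine hCne ⟨xs z, ?_, le_of_lt hcon⟩
    rw [Metric.mem_closedBall, dist_eq_norm]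
    exact hxszR z hz.le

end S9

/-- For `u` a `C¹` strictly quasi-convex function on `T^n` and any `y`,
the function `x ↦ d(x,y)²/2 + u(x)` attains its unique minimum (on the torus) at
`x_y := y + ∇u^c(y)`, and `x ↦ d(x,y)²/2` is smooth near `x_y` (there it equals
`‖x − y'‖²/2` for a lift `y'` of `y`) with Hessian equal to the identity. -/
theorem stmt_9 (n : ℕ) (u : EuclideanSpace ℝ (Fin n) → ℝ)
    (hC1 : ContDiff ℝ 1 u)
    (hper : ∀ (x : EuclideanSpace ℝ (Fin n)) (m : Fin n → ℤ),
      u (x + intVec n m) = u x)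
    (hqc : StrictConvexOn ℝ Set.univ fun x : EuclideanSpace ℝ (Fin n) =>
      u x + ‖x‖ ^ 2 / 2)
    (uc : EuclideanSpace ℝ (Fin n) → ℝ)
    (huc : uc = fun y => ⨆ x : EuclideanSpace ℝ (Fin n),
      (-(torusDistSq n x y) / 2 - u x)) :
    ∀ y : EuclideanSpace ℝ (Fin n),
      (∀ x : EuclideanSpace ℝ (Fin n),
        torusDistSq n (y + gradient uc y) y / 2 + u (y + gradient uc y)
          ≤ torusDistSq n x y / 2 + u x) ∧
      (∀ x : EuclideanSpace ℝ (Fin n),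
        torusDistSq n x y / 2 + u x
            = torusDistSq n (y + gradient uc y) y / 2 + u (y + gradient uc y) →
          ∃ m : Fin n → ℤ, x = (y + gradient uc y) + intVec n m) ∧
      ∃ ε > (0 : ℝ), ∃ y' : EuclideanSpace ℝ (Fin n),
        (∃ m : Fin n → ℤ, y' = y + intVec n m) ∧
        (∀ x ∈ Metric.ball (y + gradient uc y) ε,
          torusDistSq n x y = ‖x - y'‖ ^ 2) ∧
        ContDiffOn ℝ (⊤ : ℕ∞) (fun x => torusDistSq n x y / 2)
          (Metric.ball (y + gradient uc y) ε) ∧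
        (∀ x ∈ Metric.ball (y + gradient uc y) ε,
          fderiv ℝ (gradient fun x' => torusDistSq n x' y / 2) x
            = ContinuousLinearMap.id ℝ (EuclideanSpace ℝ (Fin n))) := by
  classical
  have hc : Continuous u := hC1.continuous
  obtain ⟨xs, hxs⟩ : ∃ xs : EuclideanSpace ℝ (Fin n) → EuclideanSpace ℝ (Fin n),
      ∀ z x', S9.F u z (xs z) ≤ S9.F u z x' := by
    have hex := S9.exists_min hc hper
    exact ⟨fun z => (hex z).choose, fun z => (hex z).choose_spec⟩
  -- supremum formula for uc
  have hucf : ∀ z, uc z = -(S9.F u z (xs z)) := by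
    intro z
    have hBA : BddAbove (Set.range fun x => -(torusDistSq n x z) / 2 - u x) := by
      refine ⟨-(S9.F u z (xs z)), ?_⟩
      rintro r ⟨x, rfl⟩
      have := S9.min_le_torus hper (hxs z) x
      simp only
      linarith
    rw [huc]
    refine le_antisymm (ciSup_le fun x => ?_) ?_
    · have := S9.min_le_torus hper (hxs z) x
      linarith
    · have h1 : -(S9.F u z (xs z)) = -(torusDistSq n (xs z) z) / 2 - u (xs z) := by
        rw [S9.torus_at_min hper (hxs z), S9.F]; ring
      rw [h1]
      exact le_ciSup hBA (xs z)
  -- gradient of uc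
  have hgrad : ∀ y, HasGradientAt uc (xs y - y) y := by
    intro y
    set w : EuclideanSpace ℝ (Fin n) → ℝ :=
      fun z => ⟪xs z, z⟫ - (u (xs z) + ‖xs z‖ ^ 2 / 2) with hw'
    have hw : ∀ z a, ⟪a, z⟫ - (u a + ‖a‖ ^ 2 / 2) ≤ w z := by
      intro z a
      have h1 := hxs z a
      rw [S9.F_eq, S9.F_eq] at h1
      have h2 := real_inner_comm a z
      have h3 := real_inner_comm (xs z) z
      simp only [hw']
      linarith
    have hucw : ∀ z, uc z = w z - ‖z‖ ^ 2 / 2 := by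
      intro z
      rw [hucf z, S9.F_eq]
      have h3 := real_inner_comm (xs z) z
      simp only [hw']
      linarith
    clear_value w
    have hwfd : HasFDerivAt w
        (InnerProductSpace.toDual ℝ (EuclideanSpace ℝ (Fin n)) (xs y)) y := by
      refine hasFDerivAt_iff_isLittleO.2 (Asymptotics.isLittleO_iff.2 fun c hc0 => ?_)
      obtain ⟨δ, hδ0, hδ⟩ := S9.argmin_cont hqc hper hc xs hxs y c hc0
      filter_upwards [Metric.ball_mem_nhds y hδ0] with z hz
      rw [Metric.mem_ball, dist_eq_norm] at hz
      have hcont := hδ z hz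
      have hlow : 0 ≤ w z - w y - ⟪xs y, z - y⟫ := by
        have h1 := hw z (xs y)
        have h2 : w y = ⟪xs y, y⟫ - (u (xs y) + ‖xs y‖ ^ 2 / 2) := by rw [hw']
        have h3 : (⟪xs y, z - y⟫ : ℝ) = ⟪xs y, z⟫ - ⟪xs y, y⟫ := inner_sub_right _ _ _
        linarith
      have hup : w z - w y - ⟪xs y, z - y⟫ ≤ ‖xs z - xs y‖ * ‖z - y‖ := by
        have h1 := hw y (xs z)
        have h2 : w z = ⟪xs z, z⟫ - (u (xs z) + ‖xs z‖ ^ 2 / 2) := by rw [hw']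
        have h3 : (⟪xs y, z - y⟫ : ℝ) = ⟪xs y, z⟫ - ⟪xs y, y⟫ := inner_sub_right _ _ _
        have h4 : (⟪xs z - xs y, z - y⟫ : ℝ)
            = ⟪xs z, z⟫ - ⟪xs z, y⟫ - ⟪xs y, z⟫ + ⟪xs y, y⟫ := by
          rw [inner_sub_left, inner_sub_right, inner_sub_right]; ring
        have h5 : (⟪xs z - xs y, z - y⟫ : ℝ) ≤ ‖xs z - xs y‖ * ‖z - y‖ :=
          real_inner_le_norm _ _
        linarith
      have h6 : ‖xs z - xs y‖ * ‖z - y‖ ≤ c * ‖z - y‖ :=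
        mul_le_mul_of_nonneg_right hcont (norm_nonneg _)
      rw [InnerProductSpace.toDual_apply_apply, Real.norm_eq_abs,
        abs_of_nonneg hlow]
      linarith
    have hnfd : HasFDerivAt (fun z : EuclideanSpace ℝ (Fin n) => ‖z‖ ^ 2 / 2)
        (InnerProductSpace.toDual ℝ (EuclideanSpace ℝ (Fin n)) y) y := by
      have h0 := (S9.hasGradientAt_half_normSq (0 : EuclideanSpace ℝ (Fin n)) y)
      rw [hasGradientAt_iff_hasFDerivAt] at h0
      simpa using h0
    have hfd : HasFDerivAt uc
        (InnerProductSpace.toDual ℝ (EuclideanSpace ℝ (Fin n)) (xs y)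
          - InnerProductSpace.toDual ℝ (EuclideanSpace ℝ (Fin n)) y) y := by
      have := hwfd.sub hnfd
      have hfun : uc = fun z => w z - ‖z‖ ^ 2 / 2 := funext hucw
      rw [hfun]
      exact this
    rw [hasGradientAt_iff_hasFDerivAt, map_sub]
    exact hfd
  intro y
  have hxy : y + gradient uc y = xs y := by
    rw [(hgrad y).gradient]; abel
  rw [hxy]
  obtain ⟨ε, hε0, hball⟩ := S9.gap hqc hper (hxs y)
  have htor : ∀ x ∈ Metric.ball (xs y) ε, torusDistSq n x y = ‖x - y‖ ^ 2 := by
    intro x hx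
    refine le_antisymm ?_ (S9.le_torusDistSq fun m => hball x hx m)
    have := S9.torusDistSq_le x y 0
    rwa [S9.intVec_zero, add_zero] at this
  refine ⟨fun x => ?_, fun x hx => ?_, ε, hε0, y, ⟨0, by rw [S9.intVec_zero, add_zero]⟩,
    htor, ?_, fun x hx => ?_⟩
  · have h1 := S9.torus_at_min hper (hxs y)
    have h2 := S9.min_le_torus hper (hxs y) x
    rw [S9.F] at h2
    rw [h1]
    linarith
  · obtain ⟨m, hm⟩ := S9.torus_attained x y
    have hFeq : S9.F u y (x + intVec n m) = S9.F u y (xs y) := by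
      have h1 : S9.F u y (x + intVec n m) = torusDistSq n x y / 2 + u x := by
        rw [S9.F, hper x m, hm]
      have h2 := S9.torus_at_min hper (hxs y)
      rw [h1, hx, h2, S9.F]
    have hminb : ∀ x', S9.F u y (x + intVec n m) ≤ S9.F u y x' :=
      fun x' => hFeq ▸ hxs y x'
    have heq : x + intVec n m = xs y := S9.min_unique hqc hminb (hxs y)
    refine ⟨-m, ?_⟩
    rw [S9.intVec_neg, ← heq]
    abel
  · exact (((contDiff_norm_sq ℝ).comp (contDiff_id.sub
      (contDiff_const (c := y)))).div_const 2).contDiffOn.congr fun x hx => by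
        rw [htor x hx]; rfl
  · have hgr : ∀ x' ∈ Metric.ball (xs y) ε,
        gradient (fun t => torusDistSq n t y / 2) x' = x' - y := by
      intro x' hx'
      have hev : (fun t => torusDistSq n t y / 2)
          =ᶠ[nhds x'] fun t => ‖t - y‖ ^ 2 / 2 := by
        filter_upwards [Metric.isOpen_ball.mem_nhds hx'] with t ht
        rw [htor t ht]
      have hg := S9.hasGradientAt_half_normSq y x'
      have hg2 : HasGradientAt (fun t => torusDistSq n t y / 2) (x' - y) x' := by
        rw [hasGradientAt_iff_hasFDerivAt] at hg ⊢
        exact hg.congr_of_eventuallyEq hev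
      exact hg2.gradient
    have hev2 : (gradient fun t => torusDistSq n t y / 2)
        =ᶠ[nhds x] fun t => t - y := by
      filter_upwards [Metric.isOpen_ball.mem_nhds hx] with t ht
      exact hgr t ht
    rw [hev2.fderiv_eq]
    have hid : HasFDerivAt (fun t : EuclideanSpace ℝ (Fin n) => t - y)
        (ContinuousLinearMap.id ℝ (EuclideanSpace ℝ (Fin n))) x :=
      (hasFDerivAt_id x).sub_const y
    exact hid.fderiv
end

section
/- For probability measures μ on X and ν on Y and a continuous cost c, define S : C(X) → C(X) by S(u) = u[v[u]] where v[u](y) = log∫ e^{−c(x,y)−u(x)} dμ(x) and u[v](x) = log∫ e^{−c(x,y)−v(y)} dν(y). Then the function ρ_u := e^{S(u)−u} satisfies ∫_X ρ_u dμ = 1, i.e. ρ_u μ is a probability measure. -/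
open MeasureTheory

lemma cont_integrable' {Z : Type*} [TopologicalSpace Z] [CompactSpace Z]
    [MeasurableSpace Z] [OpensMeasurableSpace Z] (μ : Measure Z) [IsFiniteMeasure μ]
    {f : Z → ℝ} (hf : Continuous f) : Integrable f μ := by
  rw [← integrableOn_univ]
  exact hf.continuousOn.integrableOn_compact' isCompact_univ MeasurableSet.univ

lemma integral_lipschitz' {Z : Type*} [TopologicalSpace Z] [CompactSpace Z]
    [MeasurableSpace Z] [OpensMeasurableSpace Z] (μ : Measure Z) [IsProbabilityMeasure μ] :
    LipschitzWith 1 (fun g : C(Z, ℝ) => ∫ x, g x ∂μ) := by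
  refine LipschitzWith.of_dist_le_mul fun g h => ?_
  rw [NNReal.coe_one, one_mul, Real.dist_eq]
  have h1 : ∫ x, g x ∂μ - ∫ x, h x ∂μ = ∫ x, (g x - h x) ∂μ :=
    (integral_sub (cont_integrable' μ g.continuous) (cont_integrable' μ h.continuous)).symm
  rw [h1, ← Real.norm_eq_abs]
  have h2 : ‖∫ x, (g x - h x) ∂μ‖ ≤ dist g h * (μ Set.univ).toReal :=
    norm_integral_le_of_norm_le_const (Filter.Eventually.of_forall fun x => by
      rw [Real.norm_eq_abs, ← Real.dist_eq]; exact ContinuousMap.dist_apply_le_dist x)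
  simpa using h2

/-- With `S(u) = u[v[u]]` where `v[u](y) = log ∫ e^{−c(x,y)−u(x)} dμ(x)`
and `u[v](x) = log ∫ e^{−c(x,y)−v(y)} dν(y)`, the function `ρ_u := e^{S(u)−u}` satisfies
`∫_X ρ_u dμ = 1`, i.e. `ρ_u μ` is a probability measure. -/
theorem stmt_11 {X Y : Type*} [TopologicalSpace X] [TopologicalSpace Y]
    [CompactSpace X] [CompactSpace Y] [Nonempty X] [Nonempty Y]
    [MeasurableSpace X] [BorelSpace X] [MeasurableSpace Y] [BorelSpace Y]
    (μ : Measure X) (ν : Measure Y) [IsProbabilityMeasure μ] [IsProbabilityMeasure ν]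
    (c : X → Y → ℝ) (hc : Continuous fun p : X × Y => c p.1 p.2)
    (u : X → ℝ) (hu : Continuous u)
    (v Su ρ : _)
    (hv : v = fun y : Y => Real.log (∫ x, Real.exp (-c x y - u x) ∂μ))
    (hSu : Su = fun x : X => Real.log (∫ y, Real.exp (-c x y - v y) ∂ν))
    (hρ : ρ = fun x : X => Real.exp (Su x - u x)) :
    ∫ x, ρ x ∂μ = 1 := by
  have hint_y : ∀ y, Integrable (fun x => Real.exp (-c x y - u x)) μ := fun y =>
    cont_integrable' μ (((hc.comp (continuous_id.prodMk continuous_const)).neg.sub hu).rexp)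
  have hpos_y : ∀ y, 0 < ∫ x, Real.exp (-c x y - u x) ∂μ := fun y =>
    integral_exp_pos (hint_y y)
  have hv' : ∀ y, Real.exp (v y) = ∫ x, Real.exp (-c x y - u x) ∂μ := by
    intro y; rw [hv]; exact Real.exp_log (hpos_y y)
  -- continuity of v
  have hΦc : Continuous fun p : Y × X => Real.exp (-c p.2 p.1 - u p.2) :=
    ((hc.comp (continuous_snd.prodMk continuous_fst)).neg.sub
      (hu.comp continuous_snd)).rexp
  have hIcont : Continuous fun y => ∫ x, Real.exp (-c x y - u x) ∂μ := by
    have h1 : Continuous fun y =>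
        ∫ x, ((ContinuousMap.mk _ hΦc).curry y) x ∂μ :=
      (integral_lipschitz' μ).continuous.comp (ContinuousMap.mk _ hΦc).curry.continuous
    exact h1
  have hvcont : Continuous v := by
    rw [hv]
    exact hIcont.log (fun y => (hpos_y y).ne')
  -- second integrand
  have hG : Continuous (Function.uncurry
      fun x y => Real.exp (-c x y - v y - u x)) :=
    (((hc.neg).sub (hvcont.comp continuous_snd)).sub (hu.comp continuous_fst)).rexp
  have hint_x : ∀ x, Integrable (fun y => Real.exp (-c x y - v y)) ν := fun x =>
    cont_integrable' ν (((hc.comp (continuous_const.prodMk continuous_id)).neg.sub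
      hvcont).rexp)
  have hSu' : ∀ x, Real.exp (Su x) = ∫ y, Real.exp (-c x y - v y) ∂ν := by
    intro x; rw [hSu]; exact Real.exp_log (integral_exp_pos (hint_x x))
  calc ∫ x, ρ x ∂μ
      = ∫ x, ∫ y, Real.exp (-c x y - v y - u x) ∂ν ∂μ := by
        rw [hρ]
        refine integral_congr_ae (Filter.Eventually.of_forall fun x => ?_)
        have h1 : ∀ y, Real.exp (-c x y - v y - u x)
            = Real.exp (-c x y - v y) / Real.exp (u x) := fun y => by
          rw [← Real.exp_sub]
        simp_rw [h1]
        rw [integral_div, ← hSu', ← Real.exp_sub]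
    _ = ∫ y, ∫ x, Real.exp (-c x y - v y - u x) ∂μ ∂ν :=
        integral_integral_swap_of_hasCompactSupport hG (isClosed_tsupport _).isCompact
    _ = 1 := by
        have h2 : ∀ y, ∫ x, Real.exp (-c x y - v y - u x) ∂μ = 1 := by
          intro y
          have h1 : ∀ x, Real.exp (-c x y - v y - u x)
              = Real.exp (-c x y - u x) / Real.exp (v y) := fun x => by
            rw [← Real.exp_sub]; congr 1; ring
          simp_rw [h1]
          rw [integral_div, ← hv', div_self (Real.exp_pos _).ne']
        simp_rw [h2]
        simp
end

section
/- The functional I_μ(u) = ∫ u dμ is decreasing along the Sinkhorn-type iteration u_{m+1} = S(u_m): specifically I_μ(S(u)) − I_μ(u) = ∫ log ρ_u dμ ≤ log ∫ ρ_u dμ = 0, with equality iff ρ_u = 1 μ-a.e. -/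
open MeasureTheory

section Aux

variable {Z : Type*} [TopologicalSpace Z] [CompactSpace Z] [Nonempty Z]
  [MeasurableSpace Z] [BorelSpace Z]

lemma aux_integrable (m : Measure Z) [IsFiniteMeasure m] {f : Z → ℝ}
    (hf : Continuous f) : Integrable f m := by
  have := hf.continuousOn.integrableOn_compact' (isCompact_univ (X := Z))
    MeasurableSet.univ (μ := m)
  rwa [integrableOn_univ] at this

lemma aux_pos (m : Measure Z) [IsProbabilityMeasure m] {f : Z → ℝ}
    (hf : Continuous f) (hfp : ∀ z, 0 < f z) : 0 < ∫ z, f z ∂m := by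
  obtain ⟨z₀, -, hz₀⟩ := isCompact_univ.exists_isMinOn Set.univ_nonempty hf.continuousOn
  have h1 : f z₀ ≤ ∫ z, f z ∂m := by
    have : ∫ _, f z₀ ∂m ≤ ∫ z, f z ∂m :=
      integral_mono (integrable_const _) (aux_integrable m hf)
        (fun z => hz₀ (Set.mem_univ z))
    simpa using this
  exact lt_of_lt_of_le (hfp z₀) h1

lemma aux_lipschitz_integral {X : Type*} [TopologicalSpace X] [CompactSpace X]
    [Nonempty X] [MeasurableSpace X] [BorelSpace X] (μ : Measure X) [IsProbabilityMeasure μ] :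
    LipschitzWith 1 (fun g : C(X, ℝ) => ∫ x, g x ∂μ) := by
  apply LipschitzWith.of_dist_le_mul
  intro g h
  rw [NNReal.coe_one, one_mul, dist_eq_norm]
  have hsub : ∫ x, g x ∂μ - ∫ x, h x ∂μ = ∫ x, (g x - h x) ∂μ :=
    (integral_sub (aux_integrable μ g.continuous) (aux_integrable μ h.continuous)).symm
  rw [hsub]
  calc ‖∫ x, (g x - h x) ∂μ‖ ≤ ∫ x, ‖g x - h x‖ ∂μ := norm_integral_le_integral_norm _
    _ ≤ ∫ _, dist g h ∂μ := by
        refine integral_mono ?_ (integrable_const _) (fun x => ?_)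
        · exact aux_integrable μ (g.continuous.sub h.continuous).norm
        · rw [← dist_eq_norm]
          exact ContinuousMap.dist_apply_le_dist x
    _ = dist g h := by simp

lemma aux_cont_param {X Y : Type*} [TopologicalSpace X] [TopologicalSpace Y]
    [CompactSpace X] [CompactSpace Y] [Nonempty X] [Nonempty Y]
    [MeasurableSpace X] [BorelSpace X]
    (μ : Measure X) [IsProbabilityMeasure μ] {f : X → Y → ℝ}
    (hf : Continuous fun p : X × Y => f p.1 p.2) :
    Continuous fun y => ∫ x, f x y ∂μ := by
  let F : C(X × Y, ℝ) := ⟨fun p => f p.1 p.2, hf⟩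
  let H : C(Y, C(X, ℝ)) := ContinuousMap.curry (F.comp ContinuousMap.prodSwap)
  have : (fun y => ∫ x, f x y ∂μ) = (fun g : C(X, ℝ) => ∫ x, g x ∂μ) ∘ H := rfl
  rw [this]
  exact (aux_lipschitz_integral μ).continuous.comp H.continuous

end Aux

set_option maxHeartbeats 1000000 in
/-- The functional `I_μ(u) = ∫ u dμ` is decreasing along the Sinkhorn-type
iteration `u ↦ S(u)`: `I_μ(S(u)) − I_μ(u) = ∫ log ρ_u dμ ≤ log ∫ ρ_u dμ = 0`, with
equality iff `ρ_u = 1` μ-a.e. -/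
theorem stmt_12 {X Y : Type*} [TopologicalSpace X] [TopologicalSpace Y]
    [CompactSpace X] [CompactSpace Y] [Nonempty X] [Nonempty Y]
    [MeasurableSpace X] [BorelSpace X] [MeasurableSpace Y] [BorelSpace Y]
    (μ : Measure X) (ν : Measure Y) [IsProbabilityMeasure μ] [IsProbabilityMeasure ν]
    (c : X → Y → ℝ) (hc : Continuous fun p : X × Y => c p.1 p.2)
    (u : X → ℝ) (hu : Continuous u)
    (v Su ρ : _)
    (hv : v = fun y : Y => Real.log (∫ x, Real.exp (-c x y - u x) ∂μ))
    (hSu : Su = fun x : X => Real.log (∫ y, Real.exp (-c x y - v y) ∂ν))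
    (hρ : ρ = fun x : X => Real.exp (Su x - u x)) :
    (∫ x, Su x ∂μ - ∫ x, u x ∂μ = ∫ x, Real.log (ρ x) ∂μ) ∧
    (∫ x, Real.log (ρ x) ∂μ ≤ Real.log (∫ x, ρ x ∂μ)) ∧
    (Real.log (∫ x, ρ x ∂μ) = 0) ∧
    ((∫ x, Real.log (ρ x) ∂μ = 0) ↔ ∀ᵐ x ∂μ, ρ x = 1) := by
  -- continuity of the basic integrand
  have hcu : Continuous fun p : X × Y => Real.exp (-c p.1 p.2 - u p.1) :=
    (hc.neg.sub (hu.comp continuous_fst)).rexp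
  -- the inner integral defining v is positive
  have hvint_pos : ∀ y, 0 < ∫ x, Real.exp (-c x y - u x) ∂μ := by
    intro y
    refine aux_pos μ ?_ (fun _ => Real.exp_pos _)
    have h1 : Continuous fun x : X => c x y := hc.comp (Continuous.prodMk_left y)
    exact (h1.neg.sub hu).rexp
  have hvc : Continuous v := by
    rw [hv]
    exact (aux_cont_param μ hcu).log fun y => (hvint_pos y).ne'
  have exp_v : ∀ y, Real.exp (v y) = ∫ x, Real.exp (-c x y - u x) ∂μ := by
    intro y; rw [hv]; exact Real.exp_log (hvint_pos y)
  -- the integrand defining Su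
  have hcv : Continuous fun p : Y × X => Real.exp (-c p.2 p.1 - v p.1) :=
    ((hc.comp (continuous_snd.prodMk continuous_fst)).neg.sub
      (hvc.comp continuous_fst)).rexp
  have hSuint_pos : ∀ x, 0 < ∫ y, Real.exp (-c x y - v y) ∂ν := by
    intro x
    refine aux_pos ν ?_ (fun _ => Real.exp_pos _)
    have h1 : Continuous fun y : Y => c x y := hc.comp (Continuous.prodMk_right x)
    exact (h1.neg.sub hvc).rexp
  have hSuc : Continuous Su := by
    rw [hSu]
    exact (aux_cont_param ν hcv).log fun x => (hSuint_pos x).ne'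
  have exp_Su : ∀ x, Real.exp (Su x) = ∫ y, Real.exp (-c x y - v y) ∂ν := by
    intro x; rw [hSu]; exact Real.exp_log (hSuint_pos x)
  -- basic facts about ρ
  have hρc : Continuous ρ := by rw [hρ]; exact (hSuc.sub hu).rexp
  have hρpos : ∀ x, 0 < ρ x := fun x => by rw [hρ]; exact Real.exp_pos _
  have hlogρ : ∀ x, Real.log (ρ x) = Su x - u x := fun x => by
    rw [hρ]; exact Real.log_exp _
  have hlogρc : Continuous fun x => Real.log (ρ x) := by
    have : (fun x => Real.log (ρ x)) = fun x => Su x - u x := funext hlogρ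
    rw [this]; exact hSuc.sub hu
  -- the key identity : ∫ ρ dμ = 1
  have hF : Continuous (Function.uncurry fun x y =>
      Real.exp (-c x y - v y - u x)) := by
    have h1 : Continuous fun p : X × Y => v p.2 := hvc.comp continuous_snd
    have h2 : Continuous fun p : X × Y => u p.1 := hu.comp continuous_fst
    exact ((hc.neg.sub h1).sub h2).rexp
  have hρint : ∫ x, ρ x ∂μ = 1 := by
    have h1 : ∫ x, ρ x ∂μ = ∫ x, ∫ y, Real.exp (-c x y - v y - u x) ∂ν ∂μ := by
      rw [hρ]
      congr 1 with x
      show Real.exp (Su x - u x) = _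
      rw [show Su x - u x = Su x + (-u x) by ring, Real.exp_add, exp_Su,
        ← integral_mul_const]
      congr 1 with y
      rw [← Real.exp_add]
      ring_nf
    have hswap : ∫ x, ∫ y, Real.exp (-c x y - v y - u x) ∂ν ∂μ
        = ∫ y, ∫ x, Real.exp (-c x y - v y - u x) ∂μ ∂ν := by
      apply integral_integral_swap_of_hasCompactSupport hF
      exact (isClosed_tsupport _).isCompact
    have h2 : ∀ y, ∫ x, Real.exp (-c x y - v y - u x) ∂μ = 1 := by
      intro y
      have : ∀ x, Real.exp (-c x y - v y - u x)
          = Real.exp (-c x y - u x) * Real.exp (-v y) := fun x => by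
        rw [← Real.exp_add]; ring_nf
      rw [integral_congr_ae (Filter.Eventually.of_forall this),
        integral_mul_const, ← exp_v, ← Real.exp_add]
      simp
    rw [h1, hswap]
    simp [h2]
  have hlog0 : Real.log (∫ x, ρ x ∂μ) = 0 := by rw [hρint, Real.log_one]
  -- integrability
  have hIlog : Integrable (fun x => Real.log (ρ x)) μ := aux_integrable μ hlogρc
  have hIρ : Integrable ρ μ := aux_integrable μ hρc
  refine ⟨?_, ?_, hlog0, ?_, ?_⟩
  · rw [← integral_sub (aux_integrable μ hSuc) (aux_integrable μ hu)]
    exact integral_congr_ae (Filter.Eventually.of_forall fun x => (hlogρ x).symm)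
  · have h2 : ∫ x, Real.log (ρ x) ∂μ ≤ ∫ x, (ρ x - 1) ∂μ :=
      integral_mono hIlog (hIρ.sub (integrable_const 1))
        (fun x => Real.log_le_sub_one_of_pos (hρpos x))
    have h3 : ∫ x, (ρ x - 1) ∂μ = 0 := by
      rw [integral_sub hIρ (integrable_const 1), hρint]; simp
    rw [hlog0]; linarith
  · -- equality case, forward direction
    intro h
    have hg_nonneg : 0 ≤ fun x => ρ x - 1 - Real.log (ρ x) := fun x => by
      have := Real.log_le_sub_one_of_pos (hρpos x)
      simp only [Pi.zero_apply]
      linarith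
    have hI1 : Integrable (fun x => ρ x - 1) μ := hIρ.sub (integrable_const 1)
    have hg_int : Integrable (fun x => ρ x - 1 - Real.log (ρ x)) μ := hI1.sub hIlog
    have hg0 : ∫ x, (ρ x - 1 - Real.log (ρ x)) ∂μ = 0 := by
      rw [integral_sub hI1 hIlog, integral_sub hIρ (integrable_const 1), hρint, h]
      simp
    have := (integral_eq_zero_iff_of_nonneg hg_nonneg hg_int).mp hg0
    filter_upwards [this] with x hx
    simp only [Pi.zero_apply] at hx
    by_contra hne
    have := Real.log_lt_sub_one_of_pos (hρpos x) hne
    linarith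
  · -- equality case, backward direction
    intro h
    have : ∫ x, Real.log (ρ x) ∂μ = ∫ _, (0 : ℝ) ∂μ := by
      apply integral_congr_ae
      filter_upwards [h] with x hx
      rw [hx, Real.log_one]
    simp [this]
end
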